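/- arXiv:2404.12727 — 2 statements merged into one kernel-verified Lean document; each statement's English description precedes it below -/
import Mathlib

section
/- Let f : X → Y be a continuous surjection between compact Hausdorff spaces. Then f is semi-open if and only if the induced map 2^f : 2^X → 2^Y, K ↦ f[K], is semi-open. -/
/-- The hyperspace `2^X` of all nonempty closed subsets of `X`. -/
def Hyper (X : Type*) [TopologicalSpace X] : Type _ := {K : Set X // IsClosed K ∧ K.Nonempty}

/-- The Vietoris topology on the hyperspace, generated by the subbasic sets
`{K | K ⊆ U}` and `{K | K ∩ U ≠ ∅}` for `U` open. -/
instance Hyper.instTopologicalSpace (X : Type*) [TopologicalSpace X] :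
    TopologicalSpace (Hyper X) :=
  TopologicalSpace.generateFrom
    ({S | ∃ U : Set X, IsOpen U ∧ S = {K : Hyper X | K.1 ⊆ U}} ∪
     {S | ∃ U : Set X, IsOpen U ∧ S = {K : Hyper X | (K.1 ∩ U).Nonempty}})

/-- The induced map `2^f : 2^X → 2^Y`, `K ↦ f[K]`.  (For closed subsets of a compact
space and continuous `f` into a Hausdorff space the image `f[K]` is closed, so taking
the closure below is redundant and this is indeed `K ↦ f[K]`.) -/
def hyperMap {X Y : Type*} [TopologicalSpace X] [TopologicalSpace Y] (f : X → Y) :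
    Hyper X → Hyper Y :=
  fun K => ⟨closure (f '' K.1), isClosed_closure, (K.2.2.image f).closure⟩

/-- A continuous surjection `g : A → B` is *semi-open* if for every nonempty open set
`U ⊆ A`, the interior of the image `g '' U` is nonempty. -/
def SemiOpen {A B : Type*} [TopologicalSpace A] [TopologicalSpace B] (g : A → B) : Prop :=
  ∀ U : Set A, IsOpen U → U.Nonempty → (interior (g '' U)).Nonempty

/-!
A basic Vietoris neighbourhood of `K ∈ 2^X` is a set `⟨W; G⟩` (`Hyper.vietorisNhd W G`) of
closed sets lying in an open `W ⊇ K` and meeting each member of a finite family `G` of open sets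
that `K` meets.

If `f` is semi-open, pick in each `V ∩ W` (`V ∈ G`, and also in `W`) a nonempty open `O_V` with
`closure O_V ⊆ V ∩ W`. The open sets `interior f[O_V]` are nonempty, and every closed `M` that
lies in their union and meets each of them is the image of
`K = ⋃_V closure (f⁻¹ M ∩ O_V) ∈ ⟨W; G⟩`, so the image of `⟨W; G⟩` under `2^f` has interior.

Conversely, if `2^f` is semi-open and `U ⊆ X` is open, some `L` lies in the interior of the
image of `{K | K ⊆ U}`, hence so does `L ∪ {y}` for all `y` in the open set `W` of a basic
neighbourhood `⟨W; G⟩` of `L`; as `f[K]` is closed for compact `K`, this gives `W ⊆ f[U]`.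
-/

open Set

namespace Hyper

variable {X : Type*} [TopologicalSpace X]

def vietorisNhd (W : Set X) (G : Set (Set X)) : Set (Hyper X) :=
  {M | M.1 ⊆ W ∧ ∀ V ∈ G, (M.1 ∩ V).Nonempty}

def insert [T1Space X] (x : X) (K : Hyper X) : Hyper X :=
  ⟨Insert.insert x K.1, by rw [insert_eq]; exact isClosed_singleton.union K.2.1,
    insert_nonempty _ _⟩

theorem insert_mem_vietorisNhd [T1Space X] {W : Set X} {G : Set (Set X)} {x : X} (hx : x ∈ W)
    {K : Hyper X} (hK : K ∈ vietorisNhd W G) : insert x K ∈ vietorisNhd W G :=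
  ⟨insert_subset hx hK.1,
    fun V hV => (hK.2 V hV).mono (inter_subset_inter_left _ (subset_insert _ _))⟩

theorem isOpen_setOf_subset {U : Set X} (hU : IsOpen U) : IsOpen {K : Hyper X | K.1 ⊆ U} :=
  .basic _ (Or.inl ⟨U, hU, rfl⟩)

theorem isOpen_setOf_inter_nonempty {U : Set X} (hU : IsOpen U) :
    IsOpen {K : Hyper X | (K.1 ∩ U).Nonempty} :=
  .basic _ (Or.inr ⟨U, hU, rfl⟩)

theorem isOpen_vietorisNhd {W : Set X} {G : Set (Set X)} (hW : IsOpen W) (hG : G.Finite)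
    (hGo : ∀ V ∈ G, IsOpen V) : IsOpen (vietorisNhd W G) := by
  have : vietorisNhd W G = {K | K.1 ⊆ W} ∩ ⋂ V ∈ G, {K : Hyper X | (K.1 ∩ V).Nonempty} := by
    ext K; simp [vietorisNhd]
  rw [this]
  exact (isOpen_setOf_subset hW).inter
    (hG.isOpen_biInter fun V hV => isOpen_setOf_inter_nonempty (hGo V hV))

theorem exists_vietorisNhd_subset {𝒰 : Set (Hyper X)} (h𝒰 : IsOpen 𝒰) {K : Hyper X}
    (hK : K ∈ 𝒰) :
    ∃ (W : Set X) (G : Set (Set X)), IsOpen W ∧ G.Finite ∧ (∀ V ∈ G, IsOpen V) ∧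
      K ∈ vietorisNhd W G ∧ vietorisNhd W G ⊆ 𝒰 := by
  induction h𝒰 with
  | basic s hs =>
    rcases hs with ⟨U, hU, rfl⟩ | ⟨U, hU, rfl⟩
    · exact ⟨U, ∅, hU, finite_empty, by simp, ⟨hK, by simp⟩, fun M hM => hM.1⟩
    · exact ⟨univ, {U}, isOpen_univ, finite_singleton U, by simpa using hU,
        ⟨subset_univ _, by simpa using hK⟩, fun M hM => hM.2 U rfl⟩
  | univ => exact ⟨univ, ∅, isOpen_univ, finite_empty, by simp, ⟨subset_univ _, by simp⟩,
      subset_univ _⟩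
  | inter s t _ _ ihs iht =>
    obtain ⟨W₁, G₁, hW₁, hG₁, hG₁o, hK₁, hsub₁⟩ := ihs hK.1
    obtain ⟨W₂, G₂, hW₂, hG₂, hG₂o, hK₂, hsub₂⟩ := iht hK.2
    have hmono : ∀ {W G W' G'}, W ⊆ W' → G' ⊆ G →
        vietorisNhd (X := X) W G ⊆ vietorisNhd W' G' :=
      fun hW hG M hM => ⟨hM.1.trans hW, fun V hV => hM.2 V (hG hV)⟩
    refine ⟨W₁ ∩ W₂, G₁ ∪ G₂, hW₁.inter hW₂, hG₁.union hG₂,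
      fun V hV => hV.elim (hG₁o V) (hG₂o V),
      ⟨subset_inter hK₁.1 hK₂.1, fun V hV => hV.elim (hK₁.2 V) (hK₂.2 V)⟩,
      fun M hM => ⟨hsub₁ ?_, hsub₂ ?_⟩⟩
    · exact hmono inter_subset_left subset_union_left hM
    · exact hmono inter_subset_right subset_union_right hM
  | sUnion S _ ih =>
    obtain ⟨s, hs, hKs⟩ := hK
    obtain ⟨W, G, hW, hG, hGo, hKW, hsub⟩ := ih s hs hKs
    exact ⟨W, G, hW, hG, hGo, hKW, hsub.trans (subset_sUnion_of_mem hs)⟩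

end Hyper

section

variable {X Y : Type*} [TopologicalSpace X] [TopologicalSpace Y] {f : X → Y}

theorem hyperMap_val [CompactSpace X] [T2Space Y] (hf : Continuous f) (K : Hyper X) :
    (hyperMap f K).1 = f '' K.1 :=
  (K.2.1.isCompact.image hf).isClosed.closure_eq

theorem exists_hyperMap_eq_of_subset_iUnion_image (hf : Continuous f) {ι : Type*} [Finite ι]
    (O : ι → Set X) (M : Hyper Y) (hM : M.1 ⊆ ⋃ i, f '' O i) :
    ∃ K : Hyper X, hyperMap f K = M ∧ K.1 ⊆ ⋃ i, closure (O i) ∧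
      ∀ i, (M.1 ∩ f '' O i).Nonempty → (K.1 ∩ O i).Nonempty := by
  set K : Set X := ⋃ i, closure (f ⁻¹' M.1 ∩ O i)
  have hfK : f '' K = M.1 := by
    refine Subset.antisymm ?_ fun y hy => ?_
    · rw [image_iUnion]
      refine iUnion_subset fun i => (image_closure_subset_closure_image hf).trans ?_
      exact closure_minimal ((image_mono inter_subset_left).trans (image_preimage_subset f _))
        M.2.1
    · obtain ⟨i, x, hx, rfl⟩ := mem_iUnion.1 (hM hy)
      exact ⟨x, mem_iUnion.2 ⟨i, subset_closure ⟨hy, hx⟩⟩, rfl⟩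
  have hK : IsClosed K ∧ K.Nonempty :=
    ⟨isClosed_iUnion_of_finite fun _ => isClosed_closure,
      (hfK ▸ M.2.2 : (f '' K).Nonempty).of_image⟩
  refine ⟨⟨K, hK⟩, Subtype.ext ?_, iUnion_mono fun i => closure_mono inter_subset_right, ?_⟩
  · simp only [hyperMap, hfK, M.2.1.closure_eq]
  · rintro i ⟨_, hy, x, hx, rfl⟩
    exact ⟨x, mem_iUnion.2 ⟨i, subset_closure ⟨hy, hx⟩⟩, hx⟩
theorem SemiOpen.interior_image_vietorisNhd_nonempty [RegularSpace X] [T1Space Y]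
    (hf : Continuous f) (hsemi : SemiOpen f) {W : Set X} {G : Set (Set X)} (hW : IsOpen W)
    (hG : G.Finite) (hGo : ∀ V ∈ G, IsOpen V) (hne : (Hyper.vietorisNhd W G).Nonempty) :
    (interior (hyperMap f '' Hyper.vietorisNhd W G)).Nonempty := by
  obtain ⟨K₀, hK₀W, hK₀G⟩ := hne
  have hmeets : ∀ V ∈ insert W G, (V ∩ W).Nonempty := by
    rintro V (rfl | hV)
    · exact K₀.2.2.mono fun x hx => ⟨hK₀W hx, hK₀W hx⟩
    · exact (hK₀G V hV).mono fun x hx => ⟨hx.2, hK₀W hx.1⟩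
  have hO : ∀ V : ↥(insert W G), ∃ O, IsOpen O ∧ O.Nonempty ∧ closure O ⊆ V ∩ W := by
    rintro ⟨V, hV⟩
    obtain ⟨x, hx⟩ := hmeets V hV
    have hVW : IsOpen (V ∩ W) := (hV.elim (· ▸ hW) (hGo V)).inter hW
    obtain ⟨O, ⟨hxO, hOo⟩, hOsub⟩ := (hasBasis_opens_closure x).mem_iff.1 (hVW.mem_nhds hx)
    exact ⟨O, hOo, ⟨x, hxO⟩, hOsub⟩
  choose O hOo hOne hOsub using hO
  choose y hy using fun i => hsemi _ (hOo i) (hOne i)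
  have : Finite ↥(insert W G) := (hG.insert W).to_subtype
  have : Nonempty ↥(insert W G) := ⟨⟨W, mem_insert W G⟩⟩
  set T := Hyper.vietorisNhd (⋃ i, interior (f '' O i)) (range fun i => interior (f '' O i))
  have hTo : IsOpen T := Hyper.isOpen_vietorisNhd (isOpen_iUnion fun _ => isOpen_interior)
    (finite_range _) (forall_mem_range.2 fun _ => isOpen_interior)
  have hyT : (⟨range y, (finite_range y).isClosed, range_nonempty y⟩ : Hyper Y) ∈ T :=
    ⟨range_subset_iff.2 fun i => mem_iUnion.2 ⟨i, hy i⟩,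
      forall_mem_range.2 fun i => ⟨y i, mem_range_self i, hy i⟩⟩
  have hTsub : T ⊆ hyperMap f '' Hyper.vietorisNhd W G := by
    rintro M ⟨hMsub, hMmeets⟩
    obtain ⟨K, hKM, hKsub, hKmeets⟩ := exists_hyperMap_eq_of_subset_iUnion_image hf O M
      (hMsub.trans (iUnion_mono fun _ => interior_subset))
    refine ⟨K, ⟨hKsub.trans (iUnion_subset fun i => (hOsub i).trans inter_subset_right),
      fun V hV => ?_⟩, hKM⟩
    have hKO := hKmeets ⟨V, mem_insert_of_mem W hV⟩
      ((hMmeets _ (mem_range_self _)).mono (inter_subset_inter_right _ interior_subset))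
    exact hKO.mono (inter_subset_inter_right _ (subset_closure.trans (hOsub _) |>.trans
      inter_subset_left))
  exact ⟨_, interior_maximal hTsub hTo hyT⟩

theorem SemiOpen.semiOpen_hyperMap [RegularSpace X] [T1Space Y] (hf : Continuous f)
    (h : SemiOpen f) : SemiOpen (hyperMap f) := by
  rintro 𝒰 h𝒰 ⟨K, hK⟩
  obtain ⟨W, G, hW, hG, hGo, hKW, hsub⟩ := Hyper.exists_vietorisNhd_subset h𝒰 hK
  exact (h.interior_image_vietorisNhd_nonempty hf hW hG hGo ⟨K, hKW⟩).mono
    (interior_mono (image_mono hsub))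

theorem SemiOpen.of_hyperMap [CompactSpace X] [T1Space X] [T2Space Y] (hf : Continuous f)
    (h : SemiOpen (hyperMap f)) : SemiOpen f := by
  rintro U hU ⟨x, hx⟩
  obtain ⟨L, hL⟩ := h {K | K.1 ⊆ U} (Hyper.isOpen_setOf_subset hU)
    ⟨⟨{x}, isClosed_singleton, singleton_nonempty x⟩, singleton_subset_iff.2 hx⟩
  obtain ⟨W, G, hW, -, -, hLW, hsub⟩ := Hyper.exists_vietorisNhd_subset isOpen_interior hL
  refine L.2.2.mono (hLW.1.trans (interior_maximal (fun y hy => ?_) hW))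
  obtain ⟨K, hKU, hK⟩ := interior_subset (hsub (Hyper.insert_mem_vietorisNhd hy hLW))
  have hyK : y ∈ (hyperMap f K).1 := hK ▸ mem_insert y L.1
  rw [hyperMap_val hf] at hyK
  exact image_mono hKU hyK

end

theorem semiOpen_iff_semiOpen_hyperMap_general
    {X Y : Type*} [TopologicalSpace X] [CompactSpace X] [T2Space X]
    [TopologicalSpace Y] [T2Space Y]
    {f : X → Y} (hf : Continuous f) :
    SemiOpen f ↔ SemiOpen (hyperMap f) :=
  ⟨SemiOpen.semiOpen_hyperMap hf, SemiOpen.of_hyperMap hf⟩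

/-- Theorem 4. A continuous surjection `f : X → Y` of compact Hausdorff spaces is
semi-open iff the induced map `2^f : 2^X → 2^Y` is semi-open. -/
theorem semiOpen_iff_semiOpen_hyperMap
    {X Y : Type*} [TopologicalSpace X] [CompactSpace X] [T2Space X]
    [TopologicalSpace Y] [CompactSpace Y] [T2Space Y]
    {f : X → Y} (hf : Continuous f) (hsurj : Function.Surjective f) :
    SemiOpen f ↔ SemiOpen (hyperMap f) :=
  semiOpen_iff_semiOpen_hyperMap_general hf
end

section
/- Let φ : X → Y be an extension of compact flows of a topological group T. Then the following are equivalent: (i) φ is open; (ii) the induced map 2^φ : 2^X → 2^Y is open; (iii) the induced map 2^{2^φ} : 2^{2^X} → 2^{2^Y} is open. -/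
open Set Topology TopologicalSpace

section

variable {X Y : Type*} [TopologicalSpace X] [TopologicalSpace Y]

namespace TopologicalSpace.NonemptyCompacts

theorem exists_map_eq_of_subset_image [CompactSpace X] [T2Space Y] {f : X → Y}
    (hf : Continuous f) {C : Set X} (hC : IsClosed C) {M : NonemptyCompacts Y}
    (hM : (M : Set Y) ⊆ f '' C) :
    ∃ L : NonemptyCompacts X, (L : Set X) = f ⁻¹' M ∩ C ∧ L.map f hf = M := by
  have himage : f '' (f ⁻¹' M ∩ C) = M :=
    (image_preimage_inter f C M).trans (inter_eq_left.2 hM)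
  have hne : (f ⁻¹' M ∩ C).Nonempty := (himage ▸ M.nonempty).of_image
  exact ⟨⟨⟨_, ((M.isCompact.isClosed.preimage hf).inter hC).isCompact⟩, hne⟩, rfl,
    NonemptyCompacts.ext himage⟩

end TopologicalSpace.NonemptyCompacts

theorem IsOpenMap.of_nonemptyCompacts_map {f : X → Y} (hf : Continuous f)
    (h : IsOpenMap (NonemptyCompacts.map f hf)) : IsOpenMap f := by
  intro O hO
  have himage : f '' O = (fun y => {y} : Y → NonemptyCompacts Y) ⁻¹'
      (NonemptyCompacts.map f hf '' {K | (K : Set X) ⊆ O}) := by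
    ext y
    constructor
    · rintro ⟨x, hx, rfl⟩
      exact ⟨{x}, by simpa using hx, NonemptyCompacts.map_singleton hf x⟩
    · rintro ⟨K, hKO, hKy⟩
      obtain ⟨x, hx⟩ := K.nonempty
      have : f x ∈ (NonemptyCompacts.map f hf K : Set Y) := mem_image_of_mem f hx
      exact ⟨x, hKO hx, by simpa [hKy] using this⟩
  rw [himage]
  exact (h _ (NonemptyCompacts.isOpen_subsets_of_isOpen hO)).preimage
    NonemptyCompacts.continuous_singleton

theorem IsOpenMap.nonemptyCompacts_map [CompactSpace X] [T2Space X] [T2Space Y]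
    {f : X → Y} (hf : Continuous f) (ho : IsOpenMap f) :
    IsOpenMap (NonemptyCompacts.map f hf) := by
  refine NonemptyCompacts.isTopologicalBasis.isOpenMap_iff.2 ?_
  rintro _ ⟨u, ⟨hu, hne, huo⟩, rfl⟩
  refine isOpen_iff_forall_mem_open.2 ?_
  rintro _ ⟨K, ⟨hKu, hKhit⟩, rfl⟩
  obtain ⟨W, hW, hKW, hWu⟩ := normal_exists_closure_subset K.isCompact.isClosed
    (isOpen_sUnion huo) hKu
  set u' := (fun U => f '' (U ∩ W)) '' u
  refine ⟨{M | (M : Set Y) ⊆ ⋃₀ u' ∧ ∀ U ∈ u', ((M : Set Y) ∩ U).Nonempty}, ?_, ?_, ?_⟩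
  · rintro M ⟨hMu', hMhit⟩
    have hM : (M : Set Y) ⊆ f '' closure W := by
      intro y hy
      obtain ⟨_, ⟨U, -, rfl⟩, x, hx, rfl⟩ := hMu' hy
      exact mem_image_of_mem f (subset_closure hx.2)
    obtain ⟨L, hL, rfl⟩ :=
      NonemptyCompacts.exists_map_eq_of_subset_image hf isClosed_closure hM
    refine ⟨L, ⟨?_, fun U hU => ?_⟩, rfl⟩
    · rw [hL]
      exact inter_subset_right.trans hWu
    · obtain ⟨y, hyM, x, ⟨hxU, hxW⟩, rfl⟩ := hMhit _ (mem_image_of_mem _ hU)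
      exact ⟨x, hL ▸ ⟨hyM, subset_closure hxW⟩, hxU⟩
  · exact NonemptyCompacts.isTopologicalBasis.isOpen ⟨u', ⟨hu.image _, hne.image _,
      forall_mem_image.2 fun U hU => ho _ ((huo U hU).inter hW)⟩, rfl⟩
  · simp only [mem_ofPred_eq, NonemptyCompacts.coe_map]
    refine ⟨?_, forall_mem_image.2 fun U hU => ?_⟩
    · rintro _ ⟨x, hx, rfl⟩
      obtain ⟨U, hU, hxU⟩ := hKu hx
      exact ⟨_, mem_image_of_mem _ hU, mem_image_of_mem f ⟨hxU, hKW hx⟩⟩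
    · obtain ⟨x, hxK, hxU⟩ := hKhit U hU
      exact ⟨f x, mem_image_of_mem f hxK, mem_image_of_mem f ⟨hxU, hKW hxK⟩⟩

theorem isOpenMap_nonemptyCompacts_map_iff [CompactSpace X] [T2Space X] [T2Space Y]
    {f : X → Y} (hf : Continuous f) : IsOpenMap (NonemptyCompacts.map f hf) ↔ IsOpenMap f :=
  ⟨.of_nonemptyCompacts_map hf, (·.nonemptyCompacts_map hf)⟩

namespace Hyper

section
attribute [local instance] TopologicalSpace.vietoris

theorem isEmbedding_val : IsEmbedding fun K : Hyper X => K.1 where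
  injective := Subtype.val_injective
  eq_induced := by
    rw [TopologicalSpace.vietoris, induced_generateFrom_eq, image_union, image_image, image_image]
    refine congrArg generateFrom (congrArg₂ (· ∪ ·) ?_ ?_) <;> ext S <;>
      simp [eq_comm, Set.preimage, Set.powerset]

def homeomorphNonemptyCompacts [CompactSpace X] [T2Space X] :
    Hyper X ≃ₜ NonemptyCompacts X where
  toFun K := ⟨⟨K.1, K.2.1.isCompact⟩, K.2.2⟩
  invFun L := ⟨L, L.isCompact.isClosed, L.nonempty⟩
  left_inv _ := rfl
  right_inv _ := rfl
  continuous_toFun := NonemptyCompacts.isEmbedding_coe.continuous_iff.2 isEmbedding_val.continuous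
  continuous_invFun := isEmbedding_val.continuous_iff.2 NonemptyCompacts.continuous_coe

end

instance [CompactSpace X] [T2Space X] : CompactSpace (Hyper X) :=
  homeomorphNonemptyCompacts.symm.compactSpace

instance [CompactSpace X] [T2Space X] : T2Space (Hyper X) :=
  homeomorphNonemptyCompacts.symm.t2Space

end Hyper

theorem hyperMap_eq_comp [CompactSpace X] [T2Space X] [CompactSpace Y] [T2Space Y] {f : X → Y}
    (hf : Continuous f) :
    hyperMap f = Hyper.homeomorphNonemptyCompacts.symm ∘ NonemptyCompacts.map f hf ∘
      Hyper.homeomorphNonemptyCompacts := by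
  funext K
  exact Subtype.ext (K.2.1.isCompact.image hf).isClosed.closure_eq

theorem continuous_hyperMap [CompactSpace X] [T2Space X] [CompactSpace Y] [T2Space Y]
    {f : X → Y} (hf : Continuous f) : Continuous (hyperMap f) := by
  rw [hyperMap_eq_comp hf]
  exact Hyper.homeomorphNonemptyCompacts.symm.continuous.comp
    (hf.nonemptyCompacts_map.comp Hyper.homeomorphNonemptyCompacts.continuous)

theorem isOpenMap_hyperMap_iff [CompactSpace X] [T2Space X] [CompactSpace Y] [T2Space Y]
    {f : X → Y} (hf : Continuous f) : IsOpenMap (hyperMap f) ↔ IsOpenMap f := by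
  rw [hyperMap_eq_comp hf, Homeomorph.comp_isOpenMap_iff, Homeomorph.comp_isOpenMap_iff',
    isOpenMap_nonemptyCompacts_map_iff]

end

theorem isOpenMap_iff_hyperMap_iff_hyperMap_hyperMap_general
    {X Y : Type*}
    [TopologicalSpace X] [CompactSpace X] [T2Space X]
    [TopologicalSpace Y] [CompactSpace Y] [T2Space Y]
    {φ : X → Y} (hc : Continuous φ) :
    (IsOpenMap φ ↔ IsOpenMap (hyperMap φ)) ∧
    (IsOpenMap φ ↔ IsOpenMap (hyperMap (hyperMap φ))) := by
  have h₁ := (isOpenMap_hyperMap_iff hc).symm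
  exact ⟨h₁, h₁.trans (isOpenMap_hyperMap_iff (continuous_hyperMap hc)).symm⟩

/-- Corollary 8. Let `φ : X → Y` be an extension of compact flows of a topological group
`T`. Then `φ` is open iff `2^φ : 2^X → 2^Y` is open iff `2^{2^φ} : 2^{2^X} → 2^{2^Y}`
is open. -/
theorem isOpenMap_iff_hyperMap_iff_hyperMap_hyperMap
    {T X Y : Type*} [Group T] [TopologicalSpace T] [IsTopologicalGroup T]
    [TopologicalSpace X] [CompactSpace X] [T2Space X]
    [MulAction T X] [ContinuousSMul T X]
    [TopologicalSpace Y] [CompactSpace Y] [T2Space Y]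
    [MulAction T Y] [ContinuousSMul T Y]
    {φ : X → Y} (hc : Continuous φ) (hs : Function.Surjective φ)
    (hequiv : ∀ (t : T) (x : X), φ (t • x) = t • φ x) :
    (IsOpenMap φ ↔ IsOpenMap (hyperMap φ)) ∧
    (IsOpenMap φ ↔ IsOpenMap (hyperMap (hyperMap φ))) :=
  isOpenMap_iff_hyperMap_iff_hyperMap_hyperMap_general hc
end
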